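/- arXiv:2004.06221 — 3 statements merged into one kernel-verified Lean document; each statement's English description precedes it below -/
import Mathlib

section
/- Let N ≥ 3 be an integer, N/(N−1) < p < 2, α := (p−1)(N−1), β := (p−1)/(α−1), σ := (2−p)/(p−1), and let t > 0. Define ψ_t(r) := (1/(p−1)) ∫_r^1 y^α (β y + t y^α)^{−p/(p−1)} dy for 0 < r ≤ 1. Then the radial function ψ(x) := ψ_t(|x|) satisfies L_t(ψ) = 0 in B_1 \ {0}, ψ = 0 on ∂B_1, and sup_{0<r≤1} ( r^σ |ψ_t(r)| + r^{σ+1} |ψ_t'(r)| ) < ∞. -/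
open Metric Filter Set
open scoped Topology

/-- The Laplacian of `f : ℝ^N → ℝ`, as the sum of pure second partial derivatives. -/
noncomputable def lap {N : ℕ} (f : EuclideanSpace ℝ (Fin N) → ℝ)
    (x : EuclideanSpace ℝ (Fin N)) : ℝ :=
  ∑ i : Fin N, fderiv ℝ (fun y => fderiv ℝ f y (EuclideanSpace.single i 1)) x
    (EuclideanSpace.single i 1)

/-!
For a radial function `f ‖x‖` one has `Δ = f'' + (N - 1) f' / r` and `x · ∇ = r f'`. Since
`ψ_t' = -h / (p - 1)` with `h = r^α g^(-q)`, `g = β r + t r^α`, `q = p / (p - 1)`, the equation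
`L_t ψ = 0` reduces to `h' / h = p / g - (N - 1) / r`; computing `h' / h = α / r - q g' / g`, this
is an algebraic identity, and it holds precisely because `α = (p - 1)(N - 1)` and
`β (α - 1) = p - 1`.

For the bound, `g ≥ β r` gives `h r ≤ β^(-q) r^(α - q)`, and `q = σ + 2`. Hence
`r^(σ+1) h r ≤ β^(-q) r^(α - 1) ≤ β^(-q)`, and
`r^σ ∫_r^1 h ≤ ∫_r^1 y^σ h y dy ≤ β^(-q) ∫_0^1 y^(α - 2) dy`, which is finite since `α > 1`.
-/

open MeasureTheory
open scoped RealInnerProductSpace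

section Radial

variable {E : Type*} [NormedAddCommGroup E] [InnerProductSpace ℝ E]

theorem hasFDerivAt_norm_of_ne_zero {x : E} (hx : x ≠ 0) :
    HasFDerivAt (‖·‖) (‖x‖⁻¹ • innerSL ℝ x) x := by
  have h := (hasStrictFDerivAt_norm_sq x).hasFDerivAt.sqrt (by positivity)
  simp only [Real.sqrt_sq (norm_nonneg _)] at h
  convert h using 1
  ext v
  simp only [smul_apply, coe_innerSL_apply, smul_eq_mul, one_div, mul_inv_rev, nsmul_eq_mul,
    Nat.cast_ofNat]
  field_simp

theorem HasDerivAt.hasFDerivAt_comp_norm {F : ℝ → ℝ} {F' : ℝ} {x : E}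
    (hF : HasDerivAt F F' ‖x‖) (hx : x ≠ 0) :
    HasFDerivAt (fun y => F ‖y‖) ((F' / ‖x‖) • innerSL ℝ x) x := by
  rw [div_eq_mul_inv, mul_smul]
  exact hF.comp_hasFDerivAt x (hasFDerivAt_norm_of_ne_zero hx)

theorem HasDerivAt.inner_gradient_comp_norm [CompleteSpace E] {F : ℝ → ℝ} {F' : ℝ} {x : E}
    (hF : HasDerivAt F F' ‖x‖) (hx : x ≠ 0) :
    ⟪x, gradient (fun y => F ‖y‖) x⟫ = ‖x‖ * F' := by
  have hgrad : HasGradientAt (fun y => F ‖y‖) ((F' / ‖x‖) • x) x := by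
    rw [hasGradientAt_iff_hasFDerivAt]
    refine (hF.hasFDerivAt_comp_norm hx).congr_fderiv ?_
    ext v
    simp
  rw [hgrad.gradient, real_inner_smul_right, real_inner_self_eq_norm_sq]
  field_simp [norm_ne_zero_iff.mpr hx]

end Radial

theorem lap_comp_norm {N : ℕ} {f f' : ℝ → ℝ} {f'' : ℝ} {x : EuclideanSpace ℝ (Fin N)}
    (hx : x ≠ 0) (hf : ∀ r, 0 < r → HasDerivAt f (f' r) r) (hf' : HasDerivAt f' f'' ‖x‖) :
    lap (fun y => f ‖y‖) x = f'' + (N - 1) * f' ‖x‖ / ‖x‖ := by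
  set r := ‖x‖
  have hr : 0 < r := norm_pos_iff.mpr hx
  set F : ℝ → ℝ := fun s => f' s / s
  have hF : HasDerivAt F ((f'' * r - f' r) / r ^ 2) r :=
    (hf'.div (hasDerivAt_id' r) hr.ne').congr_deriv (by ring)
  have hterm : ∀ e : EuclideanSpace ℝ (Fin N),
      fderiv ℝ (fun y => fderiv ℝ (fun y => f ‖y‖) y e) x e
        = F r * ⟪e, e⟫ + (f'' * r - f' r) / r ^ 3 * (⟪x, e⟫ * ⟪e, x⟫) := by
    intro e
    have hloc : (fun y => fderiv ℝ (fun y => f ‖y‖) y e) =ᶠ[𝓝 x] fun y => F ‖y‖ * ⟪e, y⟫ := by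
      filter_upwards [isOpen_compl_singleton.mem_nhds hx] with y hy
      rw [((hf _ (norm_pos_iff.mpr hy)).hasFDerivAt_comp_norm hy).fderiv]
      simp [F, real_inner_comm, div_mul_eq_mul_div]
    have hprod : HasFDerivAt (fun y => F ‖y‖ * ⟪e, y⟫) _ x :=
      (hF.hasFDerivAt_comp_norm hx).mul (innerSL ℝ e).hasFDerivAt
    rw [hloc.fderiv_eq, hprod.fderiv]
    simp only [add_apply, FunLike.coe_smul, Pi.smul_apply, innerSL_apply_apply,
      smul_eq_mul]
    field_simp
    ring
  have hsum := (EuclideanSpace.basisFun (Fin N) ℝ).sum_inner_mul_inner x x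
  simp only [EuclideanSpace.basisFun_apply] at hsum
  rw [lap]
  simp only [hterm, real_inner_self_eq_norm_sq, PiLp.norm_single, norm_one, one_pow, mul_one,
    Finset.sum_add_distrib, ← Finset.mul_sum, hsum, Finset.sum_const, Finset.card_univ,
    Fintype.card_fin, nsmul_eq_mul, F]
  field_simp
  ring

noncomputable def profileIntegrand (α β t q y : ℝ) : ℝ := y ^ α * (β * y + t * y ^ α) ^ (-q)

section Profile

variable {α β t q : ℝ}

theorem profileIntegrand_pos (hβ : 0 < β) (ht : 0 ≤ t) {y : ℝ} (hy : 0 < y) :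
    0 < profileIntegrand α β t q y := by
  unfold profileIntegrand; positivity

theorem hasDerivAt_profileIntegrand (hβ : 0 < β) (ht : 0 ≤ t) {r : ℝ} (hr : 0 < r) :
    HasDerivAt (profileIntegrand α β t q) (profileIntegrand α β t q r *
      (α / r - q * (β + t * α * r ^ α / r) / (β * r + t * r ^ α))) r := by
  have hg : 0 < β * r + t * r ^ α := by positivity
  have hpow : HasDerivAt (fun y : ℝ => y ^ α) (α * r ^ (α - 1)) r :=
    Real.hasDerivAt_rpow_const (Or.inl hr.ne')
  have hbase : HasDerivAt (fun y : ℝ => β * y + t * y ^ α) (β + t * (α * r ^ (α - 1))) r :=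
    (((hasDerivAt_id' r).const_mul β).add (hpow.const_mul t)).congr_deriv (by ring)
  refine (hpow.mul (hbase.rpow_const (p := -q) (Or.inl hg.ne'))).congr_deriv ?_
  rw [Real.rpow_sub_one hr.ne', Real.rpow_sub_one hg.ne', profileIntegrand]
  field_simp
  ring

theorem continuousOn_profileIntegrand (hβ : 0 < β) (ht : 0 ≤ t) :
    ContinuousOn (profileIntegrand α β t q) (Ioi 0) := fun _ hr =>
  (hasDerivAt_profileIntegrand hβ ht hr).continuousAt.continuousWithinAt

theorem profileIntegrand_le (hβ : 0 < β) (ht : 0 ≤ t) (hq : 0 ≤ q) {y : ℝ} (hy : 0 < y) :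
    profileIntegrand α β t q y ≤ β ^ (-q) * y ^ (α - q) := by
  calc profileIntegrand α β t q y ≤ y ^ α * (β * y) ^ (-q) := by
        refine mul_le_mul_of_nonneg_left (Real.rpow_le_rpow_of_nonpos (by positivity)
          (le_add_of_nonneg_right (by positivity)) (by linarith)) (by positivity)
    _ = β ^ (-q) * y ^ (α - q) := by
        rw [Real.mul_rpow hβ.le hy.le, sub_eq_add_neg, Real.rpow_add hy]
        ring

end Profile

theorem profile_logDeriv_eq {p n α β t r A : ℝ} (hp : 1 < p) (hα : α = (p - 1) * n)
    (hβ : β * (α - 1) = p - 1) (hr : r ≠ 0) (hg : β * r + t * A ≠ 0) :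
    α / r - p / (p - 1) * (β + t * α * A / r) / (β * r + t * A) =
      p / (β * r + t * A) - n / r := by
  have hp1 : p - 1 ≠ 0 := by linarith
  have hg' : r * β + t * A ≠ 0 := by rwa [mul_comm r]
  field_simp
  linear_combination (r * p) * hβ - (r * β + t * A) * hα

theorem neg_lap_add_drift_eq_zero {N : ℕ} {p α β t c : ℝ} {ψt : ℝ → ℝ} (hp : 1 < p)
    (hα : α = (p - 1) * ((N : ℝ) - 1)) (hβ : 0 < β) (hβα : β * (α - 1) = p - 1) (ht : 0 ≤ t)
    (hψt : ∀ r, 0 < r → HasDerivAt ψt (c * profileIntegrand α β t (p / (p - 1)) r) r)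
    {x : EuclideanSpace ℝ (Fin N)} (hx : x ≠ 0) :
    -lap (fun y => ψt ‖y‖) x + p * ⟪x, gradient (fun y => ψt ‖y‖) x⟫ /
      (β * ‖x‖ ^ 2 + t * ‖x‖ ^ (α + 1)) = 0 := by
  have hr : 0 < ‖x‖ := norm_pos_iff.mpr hx
  have hg : 0 < β * ‖x‖ + t * ‖x‖ ^ α := by positivity
  rw [lap_comp_norm hx hψt ((hasDerivAt_profileIntegrand hβ ht hr).const_mul c),
    (hψt _ hr).inner_gradient_comp_norm hx, profile_logDeriv_eq hp hα hβα hr.ne' hg.ne',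
    Real.rpow_add_one hr.ne']
  field_simp
  ring

theorem rpow_mul_integral_le {f : ℝ → ℝ} {σ γ C r : ℝ} (hσ : 0 ≤ σ) (hγ : -1 < γ) (hC : 0 ≤ C)
    (hr : 0 < r) (hr1 : r ≤ 1) (hf : IntervalIntegrable f volume r 1)
    (hle : ∀ y ∈ Icc r 1, f y ≤ C * y ^ (γ - σ)) :
    r ^ σ * ∫ y in r..1, f y ≤ C / (γ + 1) := by
  have hγ1 : 0 < γ + 1 := by linarith
  calc r ^ σ * ∫ y in r..1, f y = ∫ y in r..1, r ^ σ * f y :=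
        (intervalIntegral.integral_const_mul _ _).symm
    _ ≤ ∫ y in r..1, C * y ^ γ := by
        refine intervalIntegral.integral_mono_on hr1 (hf.const_mul _)
          ((intervalIntegral.intervalIntegrable_rpow' hγ).const_mul _) fun y hy => ?_
        have hy0 : 0 < y := hr.trans_le hy.1
        calc r ^ σ * f y ≤ r ^ σ * (C * y ^ (γ - σ)) := by gcongr; exact hle y hy
          _ ≤ y ^ σ * (C * y ^ (γ - σ)) := by gcongr; exact hy.1
          _ = C * y ^ γ := by rw [mul_left_comm, ← Real.rpow_add hy0, add_sub_cancel]
    _ = C * ((1 - r ^ (γ + 1)) / (γ + 1)) := by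
        rw [intervalIntegral.integral_const_mul, integral_rpow (Or.inl hγ), Real.one_rpow]
    _ ≤ C / (γ + 1) := by
        rw [mul_div_assoc']
        gcongr
        nlinarith [Real.rpow_nonneg hr.le (γ + 1)]

section ProfileBounds

variable {α β t q σ c : ℝ} {ψt : ℝ → ℝ}

theorem hasDerivAt_profile (hβ : 0 < β) (ht : 0 ≤ t)
    (hψt : ∀ r, ψt r = c * ∫ y in r..1, profileIntegrand α β t q y) {r : ℝ} (hr : 0 < r) :
    HasDerivAt ψt (-c * profileIntegrand α β t q r) r := by
  have hcont := continuousOn_profileIntegrand (α := α) (q := q) hβ ht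
  have hint : IntervalIntegrable (profileIntegrand α β t q) volume r 1 :=
    (hcont.mono fun y hy => (lt_min hr one_pos).trans_le hy.1).intervalIntegrable
  rw [funext hψt, neg_mul, ← mul_neg]
  exact (intervalIntegral.integral_hasDerivAt_left hint
    (hcont.stronglyMeasurableAtFilter isOpen_Ioi r hr)
    (hcont.continuousAt (isOpen_Ioi.mem_nhds hr))).const_mul c

theorem rpow_mul_profileIntegrand_le (hβ : 0 < β) (ht : 0 ≤ t) (hq : 0 ≤ q)
    (hσq : q ≤ α + σ + 1) {r : ℝ} (hr : 0 < r) (hr1 : r ≤ 1) :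
    r ^ (σ + 1) * profileIntegrand α β t q r ≤ β ^ (-q) := by
  calc r ^ (σ + 1) * profileIntegrand α β t q r ≤ r ^ (σ + 1) * (β ^ (-q) * r ^ (α - q)) := by
        gcongr; exact profileIntegrand_le hβ ht hq hr
    _ = β ^ (-q) * r ^ (α + σ + 1 - q) := by
        rw [mul_left_comm, ← Real.rpow_add hr]; ring_nf
    _ ≤ β ^ (-q) := mul_le_of_le_one_right (by positivity)
        (Real.rpow_le_one hr.le hr1 (by linarith))

theorem rpow_mul_integral_profileIntegrand_le (hβ : 0 < β) (ht : 0 ≤ t) (hq : 0 ≤ q)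
    (hσ : 0 ≤ σ) (hσq : q < α + σ + 1) {r : ℝ} (hr : 0 < r) (hr1 : r ≤ 1) :
    r ^ σ * ∫ y in r..1, profileIntegrand α β t q y ≤ β ^ (-q) / (α + σ - q + 1) := by
  refine rpow_mul_integral_le hσ (by linarith) (by positivity) hr hr1 ?_ fun y hy => ?_
  · exact ((continuousOn_profileIntegrand hβ ht).mono
      fun y hy => (lt_min hr one_pos).trans_le hy.1).intervalIntegrable
  · rw [show α + σ - q - σ = α - q by ring]
    exact profileIntegrand_le hβ ht hq (hr.trans_le hy.1)

theorem exists_weighted_bound_of_profile (hc : 0 ≤ c) (hβ : 0 < β) (ht : 0 ≤ t) (hq : 0 ≤ q)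
    (hσ : 0 ≤ σ) (hσq : q < α + σ + 1)
    (hψt : ∀ r, ψt r = c * ∫ y in r..1, profileIntegrand α β t q y) :
    ∃ C, ∀ r ∈ Ioc (0 : ℝ) 1, r ^ σ * |ψt r| + r ^ (σ + 1) * |deriv ψt r| ≤ C := by
  refine ⟨c * (β ^ (-q) / (α + σ - q + 1)) + c * β ^ (-q), fun r ⟨hr, hr1⟩ => ?_⟩
  have hint : 0 ≤ ∫ y in r..1, profileIntegrand α β t q y :=
    intervalIntegral.integral_nonneg hr1 fun y hy =>
      (profileIntegrand_pos hβ ht (hr.trans_le hy.1)).le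
  rw [(hasDerivAt_profile hβ ht hψt hr).deriv, hψt, abs_mul, abs_mul, abs_neg,
    abs_of_nonneg hc, abs_of_nonneg hint, abs_of_pos (profileIntegrand_pos hβ ht hr),
    mul_left_comm, mul_left_comm (r ^ (σ + 1))]
  gcongr
  · exact rpow_mul_integral_profileIntegrand_le hβ ht hq hσ hσq hr hr1
  · exact rpow_mul_profileIntegrand_le hβ ht hq hσq.le hr hr1

end ProfileBounds

/-- `ψ_t(r) = (1/(p-1)) ∫_r^1 y^α (βy + ty^α)^{-p/(p-1)} dy` gives a radial
element of the kernel of the linearized operator `L_t` on `B₁ \ {0}`, vanishing on `∂B₁`,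
with the weighted norm `sup (r^σ|ψ_t| + r^{σ+1}|ψ_t'|)` finite. -/
theorem stmt_4 (N : ℕ) (hN : 3 ≤ N) (p : ℝ)
    (hp1 : (N : ℝ) / ((N : ℝ) - 1) < p) (hp2 : p < 2)
    (α β σ t : ℝ) (hα : α = (p - 1) * ((N : ℝ) - 1)) (hβ : β = (p - 1) / (α - 1))
    (hσ : σ = (2 - p) / (p - 1)) (ht : 0 < t)
    (ψt : ℝ → ℝ)
    (hψt : ∀ r : ℝ, ψt r =
      (1 / (p - 1)) * ∫ y in r..(1 : ℝ), y ^ α * (β * y + t * y ^ α) ^ (-(p / (p - 1))))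
    (ψ : EuclideanSpace ℝ (Fin N) → ℝ) (hψ : ∀ x, ψ x = ψt ‖x‖) :
    (∀ x ∈ ball (0 : EuclideanSpace ℝ (Fin N)) 1 \ {0},
      -lap ψ x + p * (inner ℝ x (gradient ψ x) : ℝ) / (β * ‖x‖ ^ 2 + t * ‖x‖ ^ (α + 1)) = 0) ∧
    (∀ x : EuclideanSpace ℝ (Fin N), ‖x‖ = 1 → ψ x = 0) ∧
    (∃ C : ℝ, ∀ r ∈ Ioc (0 : ℝ) 1, r ^ σ * |ψt r| + r ^ (σ + 1) * |deriv ψt r| ≤ C) := by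
  have hN1 : (2 : ℝ) ≤ N - 1 := by
    have : (3 : ℝ) ≤ N := by exact_mod_cast hN
    linarith
  have hpN : (N : ℝ) < p * (N - 1) := (div_lt_iff₀ (by linarith)).mp hp1
  have hp : 1 < p := by nlinarith
  have hα1 : 1 < α := by rw [hα]; nlinarith
  have hβ0 : 0 < β := by rw [hβ]; exact div_pos (by linarith) (by linarith)
  have hβα : β * (α - 1) = p - 1 := by rw [hβ, div_mul_cancel₀ _ (by linarith)]
  have hσ0 : 0 < σ := by rw [hσ]; exact div_pos (by linarith) (by linarith)
  have hq : p / (p - 1) = σ + 2 := by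
    rw [hσ, div_add' _ _ _ (by linarith)]
    ring
  obtain rfl : ψ = fun x => ψt ‖x‖ := funext hψ
  refine ⟨fun x hx => ?_, fun x hx => ?_, ?_⟩
  · exact neg_lap_add_drift_eq_zero hp hα hβ0 hβα ht.le
      (fun r hr => hasDerivAt_profile hβ0 ht.le hψt hr) (by simpa using hx.2)
  · simp only [hx, hψt, intervalIntegral.integral_same, mul_zero]
  · exact exists_weighted_bound_of_profile (by positivity) hβ0 ht.le (by positivity) hσ0.le
      (by linarith) hψt
end

section
/- Let N ≥ 3 be an integer, N/(N−1) < p < 2, α := (p−1)(N−1), β := (p−1)/(α−1), σ := (2−p)/(p−1), and for t > 0 let u_t(x) := ∫_{|x|}^1 (β y + t y^α)^{−1/(p−1)} dy on B_1 \ {0}. Let g be a nonnegative continuous function on closure(B_1). Then there exists C > 0 such that for all 0 < R < 1, 0 < δ < 1, t > 1, and every continuously differentiable function φ on B_1 \ {0} with sup_{x∈B_1} ( |x|^σ|φ(x)| + |x|^{σ+1}|∇φ(x)| ) ≤ R, one has sup_{x∈B_1} |x|^{σ+2} g(x) |∇u_t(x) + ∇φ(x)|^p ≤ C ( R^p + sup_{|z|≤δ}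 g(z) + t^{−p/(p−1)} δ^{−((N−1)p − σ − 2)} ). -/
/-!
The function `u_t` is radial with `u_t'(r) = -(β r + t r^α)^(-1/(p-1))`, and `σ + 1 = 1/(p-1)`,
so `(|x|^(σ+1) |∇u_t|)^p = r^q (β r + t r^α)^(-q)` with `q = σ + 2 = p/(p-1)`. Dropping one of
the two summands of `β r + t r^α` bounds this by `β^(-q)`, which is used where `|x| ≤ δ` (there
`g(x) ≤ sup_{B_δ} g`), and by `t^(-q) r^(-(α-1) q) ≤ t^(-q) δ^(-((N-1)p - σ - 2))`, which is used
where `|x| ≥ δ` (there `g ≤ max g`). The perturbation contributes at most `R^p` after the same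
weighting, and `(a + b)^p ≤ 2^(p-1) (a^p + b^p)` combines the two parts.
-/

open Metric Filter Set
open scoped Topology

theorem norm_fderiv_comp_norm {E : Type*} [NormedAddCommGroup E] [NormedSpace ℝ E]
    [Nontrivial E] {F : ℝ → ℝ} {F' : ℝ} {x : E} (hF : HasDerivAt F F' ‖x‖)
    (hx : DifferentiableAt ℝ (‖·‖) x) :
    ‖fderiv ℝ (fun y => F ‖y‖) x‖ = |F'| := by
  rw [show (fun y => F ‖y‖) = F ∘ (‖·‖) from rfl, (hF.comp_hasFDerivAt x hx.hasFDerivAt).fderiv,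
    norm_smul, norm_fderiv_norm hx, mul_one, Real.norm_eq_abs]

theorem norm_gradient_comp_norm {E : Type*} [NormedAddCommGroup E] [InnerProductSpace ℝ E]
    [CompleteSpace E] {F : ℝ → ℝ} {F' : ℝ} {x : E} (hF : HasDerivAt F F' ‖x‖) (hx : x ≠ 0) :
    ‖gradient (fun y => F ‖y‖) x‖ = |F'| := by
  have : Nontrivial E := nontrivial_of_ne x 0 hx
  rw [gradient, LinearIsometryEquiv.norm_map,
    norm_fderiv_comp_norm hF ((contDiffAt_norm ℝ hx).differentiableAt one_ne_zero)]

theorem norm_gradient_intervalIntegral_norm {E : Type*} [NormedAddCommGroup E]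
    [InnerProductSpace ℝ E] [CompleteSpace E] {f : ℝ → ℝ} (hf : ContinuousOn f (Ioi 0))
    {c : ℝ} (hc : 0 < c) {x : E} (hx : x ≠ 0) :
    ‖gradient (fun y => ∫ s in ‖y‖..c, f s) x‖ = |f ‖x‖| := by
  have hx' : 0 < ‖x‖ := norm_pos_iff.2 hx
  have hfx : ContinuousAt f ‖x‖ := hf.continuousAt (Ioi_mem_nhds hx')
  have hint : IntervalIntegrable f MeasureTheory.volume ‖x‖ c :=
    (hf.mono fun y hy => lt_of_lt_of_le (lt_min hx' hc) hy.1).intervalIntegrable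
  rw [norm_gradient_comp_norm (intervalIntegral.integral_hasDerivAt_left hint
    (hf.stronglyMeasurableAtFilter isOpen_Ioi _ hx') hfx) hx, abs_neg]

theorem le_csSup_image_closedBall {E : Type*} [PseudoMetricSpace E] [ProperSpace E]
    {g : E → ℝ} {c : E} {ρ δ : ℝ} (hg : ContinuousOn g (closedBall c ρ)) (hδ : δ ≤ ρ)
    {x : E} (hx : x ∈ closedBall c δ) : g x ≤ sSup (g '' closedBall c δ) :=
  le_csSup (((isCompact_closedBall c ρ).bddAbove_image hg).mono
    (image_mono (closedBall_subset_closedBall hδ))) (mem_image_of_mem g hx)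

theorem Real.rpow_add_le_two_rpow_mul {a b p : ℝ} (ha : 0 ≤ a) (hb : 0 ≤ b) (hp : 1 ≤ p) :
    (a + b) ^ p ≤ 2 ^ (p - 1) * (a ^ p + b ^ p) := by
  lift a to NNReal using ha
  lift b to NNReal using hb
  exact_mod_cast NNReal.rpow_add_le_mul_rpow_add_rpow a b hp

theorem Real.rpow_mul_mul_rpow {r X s p : ℝ} (hr : 0 ≤ r) (hX : 0 ≤ X) :
    (r ^ s * X) ^ p = r ^ (s * p) * X ^ p := by
  rw [Real.mul_rpow (Real.rpow_nonneg hr s) hX, ← Real.rpow_mul hr]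

theorem rpow_mul_mul_norm_add_rpow_le {E : Type*} [SeminormedAddCommGroup E] {a b : E}
    {r s p G M R : ℝ} (hr : 0 ≤ r) (hp : 1 ≤ p) (hG : 0 ≤ G) (hGM : G ≤ M)
    (hb : r ^ s * ‖b‖ ≤ R) :
    r ^ (s * p) * G * ‖a + b‖ ^ p ≤ 2 ^ (p - 1) * (G * (r ^ s * ‖a‖) ^ p + M * R ^ p) := by
  have hrs : 0 ≤ r ^ s := Real.rpow_nonneg hr s
  have hR : 0 ≤ R := (by positivity : 0 ≤ r ^ s * ‖b‖).trans hb
  have hab : r ^ s * ‖a + b‖ ≤ r ^ s * ‖a‖ + R :=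
    calc r ^ s * ‖a + b‖ ≤ r ^ s * ‖a‖ + r ^ s * ‖b‖ := by
          rw [← mul_add]; gcongr; exact norm_add_le a b
      _ ≤ r ^ s * ‖a‖ + R := by gcongr
  calc r ^ (s * p) * G * ‖a + b‖ ^ p = G * (r ^ s * ‖a + b‖) ^ p := by
        rw [Real.rpow_mul_mul_rpow hr (norm_nonneg _)]; ring
    _ ≤ G * (2 ^ (p - 1) * ((r ^ s * ‖a‖) ^ p + R ^ p)) := by
        gcongr
        exact (Real.rpow_le_rpow (by positivity) hab (by linarith)).trans
          (Real.rpow_add_le_two_rpow_mul (by positivity) hR hp)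
    _ ≤ 2 ^ (p - 1) * (G * (r ^ s * ‖a‖) ^ p + M * R ^ p) := by
        rw [mul_left_comm, mul_add]
        gcongr

section Profile

variable {β t α q r : ℝ}

theorem continuousOn_profile_rpow (hβ : 0 < β) (ht : 0 ≤ t) :
    ContinuousOn (fun y => (β * y + t * y ^ α) ^ q) (Ioi 0) := by
  have hpow : ContinuousOn (fun y : ℝ => y ^ α) (Ioi 0) :=
    continuousOn_id.rpow_const fun y hy => Or.inl (ne_of_gt hy)
  refine ((continuousOn_const.mul continuousOn_id).add (continuousOn_const.mul hpow)).rpow_const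
    fun y (hy : 0 < y) => Or.inl ?_
  exact (add_pos_of_pos_of_nonneg (mul_pos hβ hy) (mul_nonneg ht (Real.rpow_nonneg hy.le α))).ne'

theorem rpow_mul_profile_rpow_neg_le_left (hβ : 0 < β) (ht : 0 ≤ t) (hr : 0 < r) (hq : 0 ≤ q) :
    r ^ q * (β * r + t * r ^ α) ^ (-q) ≤ β ^ (-q) :=
  calc r ^ q * (β * r + t * r ^ α) ^ (-q)
      ≤ r ^ q * (β * r) ^ (-q) := by
        gcongr ?_ * ?_
        exact Real.rpow_le_rpow_of_nonpos (by positivity) (le_add_of_nonneg_right (by positivity))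
          (neg_nonpos.2 hq)
    _ = β ^ (-q) := by
        rw [Real.mul_rpow hβ.le hr.le, Real.rpow_neg hr.le, mul_left_comm,
          mul_inv_cancel₀ (Real.rpow_pos_of_pos hr q).ne', mul_one]

theorem rpow_mul_profile_rpow_neg_le_right (hβ : 0 ≤ β) (ht : 0 < t) (hr : 0 < r) (hq : 0 ≤ q) :
    r ^ q * (β * r + t * r ^ α) ^ (-q) ≤ t ^ (-q) * r ^ (-((α - 1) * q)) :=
  calc r ^ q * (β * r + t * r ^ α) ^ (-q)
      ≤ r ^ q * (t * r ^ α) ^ (-q) := by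
        gcongr ?_ * ?_
        exact Real.rpow_le_rpow_of_nonpos (by positivity) (le_add_of_nonneg_left (by positivity))
          (neg_nonpos.2 hq)
    _ = t ^ (-q) * r ^ (-((α - 1) * q)) := by
        rw [Real.mul_rpow ht.le (Real.rpow_nonneg hr.le α), ← Real.rpow_mul hr.le, mul_left_comm,
          ← Real.rpow_add hr]
        ring_nf

theorem mul_rpow_mul_profile_rpow_neg_le {G M S δ : ℝ} (hβ : 0 < β) (ht : 0 < t) (hr : 0 < r)
    (hq : 0 ≤ q) (hα : 1 ≤ α) (hδ : 0 < δ) (hG : 0 ≤ G) (hGM : G ≤ M) (hGS : r ≤ δ → G ≤ S)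
    (hS : 0 ≤ S) :
    G * (r ^ q * (β * r + t * r ^ α) ^ (-q)) ≤
      M * (t ^ (-q) * δ ^ (-((α - 1) * q))) + β ^ (-q) * S := by
  have hM : 0 ≤ M := hG.trans hGM
  rcases le_total r δ with hrδ | hδr
  · have : G * (r ^ q * (β * r + t * r ^ α) ^ (-q)) ≤ S * β ^ (-q) :=
      mul_le_mul (hGS hrδ) (rpow_mul_profile_rpow_neg_le_left hβ ht.le hr hq) (by positivity) hS
    linarith [mul_nonneg hM (by positivity : 0 ≤ t ^ (-q) * δ ^ (-((α - 1) * q)))]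
  · have hδr' : r ^ (-((α - 1) * q)) ≤ δ ^ (-((α - 1) * q)) :=
      Real.rpow_le_rpow_of_nonpos hδ hδr (neg_nonpos.2 (mul_nonneg (by linarith) hq))
    have : G * (r ^ q * (β * r + t * r ^ α) ^ (-q)) ≤ M * (t ^ (-q) * δ ^ (-((α - 1) * q))) :=
      mul_le_mul hGM ((rpow_mul_profile_rpow_neg_le_right hβ.le ht hr hq).trans (by gcongr))
        (by positivity) hM
    linarith [mul_nonneg (Real.rpow_pos_of_pos hβ (-q)).le hS]

end Profile

theorem one_lt_of_div_sub_one_lt {N p : ℝ} (hN : 1 < N) (h : N / (N - 1) < p) : 1 < p :=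
  ((one_lt_div (sub_pos.2 hN)).2 (by linarith)).trans h

theorem stmt_13_general (N : ℕ) (hN : 3 ≤ N) (p : ℝ)
    (hp1 : (N : ℝ) / ((N : ℝ) - 1) < p)
    (α β σ : ℝ) (hα : α = (p - 1) * ((N : ℝ) - 1)) (hβ : β = (p - 1) / (α - 1))
    (hσ : σ = (2 - p) / (p - 1))
    (u : ℝ → EuclideanSpace ℝ (Fin N) → ℝ)
    (hu : ∀ (t : ℝ) (x : EuclideanSpace ℝ (Fin N)),
      u t x = ∫ y in (‖x‖)..(1 : ℝ), (β * y + t * y ^ α) ^ (-(1 / (p - 1))))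
    (g : EuclideanSpace ℝ (Fin N) → ℝ)
    (hg_nonneg : ∀ x ∈ closedBall (0 : EuclideanSpace ℝ (Fin N)) 1, 0 ≤ g x)
    (hg_cont : ContinuousOn g (closedBall (0 : EuclideanSpace ℝ (Fin N)) 1)) :
    ∃ C > (0 : ℝ), ∀ R δ t : ℝ, 0 < R → R < 1 → 0 < δ → δ < 1 → 1 < t →
      ∀ φ : EuclideanSpace ℝ (Fin N) → ℝ,
        ContDiffOn ℝ 1 φ (ball (0 : EuclideanSpace ℝ (Fin N)) 1 \ {0}) →
        (∀ x ∈ ball (0 : EuclideanSpace ℝ (Fin N)) 1 \ {0},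
          ‖x‖ ^ σ * |φ x| + ‖x‖ ^ (σ + 1) * ‖gradient φ x‖ ≤ R) →
        ∀ x ∈ ball (0 : EuclideanSpace ℝ (Fin N)) 1 \ {0},
          ‖x‖ ^ (σ + 2) * g x * ‖gradient (u t) x + gradient φ x‖ ^ p ≤
            C * (R ^ p + sSup (g '' closedBall (0 : EuclideanSpace ℝ (Fin N)) δ)
              + t ^ (-(p / (p - 1))) * δ ^ (-(((N : ℝ) - 1) * p - σ - 2))) := by
  have hN1 : (1 : ℝ) < N := by exact_mod_cast (by omega : 1 < N)
  have hp : 1 < p := one_lt_of_div_sub_one_lt hN1 hp1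
  have hα1 : 1 < α := by
    rw [hα]; nlinarith [(div_lt_iff₀ (sub_pos.2 hN1)).1 hp1]
  have hβ0 : 0 < β := hβ ▸ div_pos (by linarith) (by linarith)
  have hp0 : p - 1 ≠ 0 := (sub_pos.2 hp).ne'
  have hs : σ + 1 = 1 / (p - 1) := by rw [hσ]; field_simp; ring
  have hq : (σ + 1) * p = σ + 2 := by rw [hσ]; field_simp; ring
  have hqp : σ + 2 = p / (p - 1) := by rw [hσ]; field_simp; ring
  have hq0 : 0 ≤ σ + 2 := hqp ▸ div_nonneg (by linarith) (by linarith)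
  have hκ : ((N : ℝ) - 1) * p - σ - 2 = (α - 1) * (σ + 2) := by
    rw [hα, hσ]; field_simp; ring
  set M := sSup (g '' closedBall (0 : EuclideanSpace ℝ (Fin N)) 1)
  have hM : 0 ≤ M := (hg_nonneg 0 (by simp)).trans
    (le_csSup_image_closedBall hg_cont le_rfl (by simp))
  refine ⟨2 ^ (p - 1) * (M + β ^ (-(σ + 2))), by positivity, ?_⟩
  intro R δ t _ _ hδ0 hδ1 ht φ _ hφ x ⟨hx1, hx0⟩
  set S := sSup (g '' closedBall (0 : EuclideanSpace ℝ (Fin N)) δ)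
  set T := t ^ (-(p / (p - 1))) * δ ^ (-(((N : ℝ) - 1) * p - σ - 2))
  have hr : 0 < ‖x‖ := norm_pos_iff.2 hx0
  have hxB : x ∈ closedBall (0 : EuclideanSpace ℝ (Fin N)) 1 := ball_subset_closedBall hx1
  have hgx : g x ≤ M := le_csSup_image_closedBall hg_cont le_rfl hxB
  have hS : 0 ≤ S := (hg_nonneg 0 (by simp)).trans
    (le_csSup_image_closedBall hg_cont hδ1.le (by simpa using hδ0.le))
  have hgradu : ‖gradient (u t) x‖ = (β * ‖x‖ + t * ‖x‖ ^ α) ^ (-(σ + 1)) := by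
    rw [show u t = _ from funext (hu t), norm_gradient_intervalIntegral_norm
      (continuousOn_profile_rpow hβ0 (by linarith)) one_pos hx0, abs_of_pos (by positivity), hs]
  have hprofile : g x * (‖x‖ ^ (σ + 1) * ‖gradient (u t) x‖) ^ p ≤
      M * T + β ^ (-(σ + 2)) * S := by
    have hT : T = t ^ (-(σ + 2)) * δ ^ (-((α - 1) * (σ + 2))) := by rw [← hκ, hqp]
    rw [hgradu, Real.rpow_mul_mul_rpow hr.le (by positivity), ← Real.rpow_mul (by positivity),
      neg_mul, hq, hT]
    exact mul_rpow_mul_profile_rpow_neg_le hβ0 (by linarith) hr hq0 hα1.le hδ0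
      (hg_nonneg x hxB) hgx
      (fun h => le_csSup_image_closedBall hg_cont hδ1.le (mem_closedBall_zero_iff.2 h)) hS
  have hφx : ‖x‖ ^ (σ + 1) * ‖gradient φ x‖ ≤ R :=
    (le_add_of_nonneg_left (by positivity)).trans (hφ x ⟨hx1, hx0⟩)
  calc ‖x‖ ^ (σ + 2) * g x * ‖gradient (u t) x + gradient φ x‖ ^ p
      = ‖x‖ ^ ((σ + 1) * p) * g x * ‖gradient (u t) x + gradient φ x‖ ^ p := by rw [hq]
    _ ≤ 2 ^ (p - 1) * (g x * (‖x‖ ^ (σ + 1) * ‖gradient (u t) x‖) ^ p + M * R ^ p) :=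
        rpow_mul_mul_norm_add_rpow_le hr.le hp.le (hg_nonneg x hxB) hgx hφx
    _ ≤ 2 ^ (p - 1) * (M * T + β ^ (-(σ + 2)) * S + M * R ^ p) := by gcongr
    _ ≤ 2 ^ (p - 1) * (M + β ^ (-(σ + 2))) * (R ^ p + S + T) := by
        rw [mul_assoc]
        gcongr
        have hβq : 0 ≤ β ^ (-(σ + 2)) := by positivity
        have hT : 0 ≤ T := by positivity
        nlinarith [mul_nonneg hM hS, mul_nonneg hβq hT,
          mul_nonneg hβq (by positivity : 0 ≤ R ^ p)]

/-- "Into", part 1: weighted bound on `g|∇u_t + ∇φ|^p` for `φ` in the ball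
of radius `R` of the weighted space `X`. -/
theorem stmt_13 (N : ℕ) (hN : 3 ≤ N) (p : ℝ)
    (hp1 : (N : ℝ) / ((N : ℝ) - 1) < p) (hp2 : p < 2)
    (α β σ : ℝ) (hα : α = (p - 1) * ((N : ℝ) - 1)) (hβ : β = (p - 1) / (α - 1))
    (hσ : σ = (2 - p) / (p - 1))
    (u : ℝ → EuclideanSpace ℝ (Fin N) → ℝ)
    (hu : ∀ (t : ℝ) (x : EuclideanSpace ℝ (Fin N)),
      u t x = ∫ y in (‖x‖)..(1 : ℝ), (β * y + t * y ^ α) ^ (-(1 / (p - 1))))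
    (g : EuclideanSpace ℝ (Fin N) → ℝ)
    (hg_nonneg : ∀ x ∈ closedBall (0 : EuclideanSpace ℝ (Fin N)) 1, 0 ≤ g x)
    (hg_cont : ContinuousOn g (closedBall (0 : EuclideanSpace ℝ (Fin N)) 1)) :
    ∃ C > (0 : ℝ), ∀ R δ t : ℝ, 0 < R → R < 1 → 0 < δ → δ < 1 → 1 < t →
      ∀ φ : EuclideanSpace ℝ (Fin N) → ℝ,
        ContDiffOn ℝ 1 φ (ball (0 : EuclideanSpace ℝ (Fin N)) 1 \ {0}) →
        (∀ x ∈ ball (0 : EuclideanSpace ℝ (Fin N)) 1 \ {0},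
          ‖x‖ ^ σ * |φ x| + ‖x‖ ^ (σ + 1) * ‖gradient φ x‖ ≤ R) →
        ∀ x ∈ ball (0 : EuclideanSpace ℝ (Fin N)) 1 \ {0},
          ‖x‖ ^ (σ + 2) * g x * ‖gradient (u t) x + gradient φ x‖ ^ p ≤
            C * (R ^ p + sSup (g '' closedBall (0 : EuclideanSpace ℝ (Fin N)) δ)
              + t ^ (-(p / (p - 1))) * δ ^ (-(((N : ℝ) - 1) * p - σ - 2))) :=
  stmt_13_general N hN p hp1 α β σ hα hβ hσ u hu g hg_nonneg hg_cont
end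

section
/- Let N ≥ 3 be an integer, N/(N−1) < p < 2, α := (p−1)(N−1), β := (p−1)/(α−1), σ := (2−p)/(p−1), and for t > 0 let u_t(x) := ∫_{|x|}^1 (β y + t y^α)^{−1/(p−1)} dy on B_1 \ {0}. Then there exists C > 0 such that for all t > 1, 0 < R < 1, and every continuously differentiable function φ on B_1 \ {0} with sup_{x∈B_1} ( |x|^σ|φ(x)| + |x|^{σ+1}|∇φ(x)| ) ≤ R, one has sup_{x∈B_1} |x|^{σ+2} | |∇u_t(x) + ∇φ(x)|^p − p|∇u_t(x)|^{p−2} ∇u_t(x)·∇φ(x) − |∇u_t(x)|^p | ≤ C R^p. -/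
/-!
The estimate is pointwise. For `1 < p ≤ 2` and vectors `a, b` of an inner product space,
`|‖a + b‖^p - p ‖a‖^(p-2) ⟪a, b⟫ - ‖a‖^p| ≤ C ‖b‖^p`, and since `(σ + 1) p = σ + 2` the weight
`‖x‖^(σ+2)` turns `C ‖∇φ‖^p` into `C (‖x‖^(σ+1) ‖∇φ‖)^p ≤ C R^p`.

For the pointwise inequality: if `‖a‖ ≤ 2‖b‖`, each of the three terms is `O(‖b‖^p)`. Otherwise
write `‖v‖^p = (‖v‖²)^(p/2)`; both `‖a‖²` and `‖a + b‖²` lie above `(‖a‖/2)²`, where the concave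
power `z^(p/2)` has second derivative `O(‖a‖^(p-4))`, so the remainder is
`O(‖a‖^(p-4) (‖a + b‖² - ‖a‖²)² + ‖a‖^(p-2) ‖b‖²) = O(‖a‖^(p-2) ‖b‖²)`, which is `O(‖b‖^p)`
because `p ≤ 2` and `‖b‖ ≤ ‖a‖`.
-/

open Metric Set

namespace Real

theorem abs_rpow_sub_rpow_le_of_nonpos {γ m x y : ℝ} (hγ : γ ≤ 0) (hm : 0 < m)
    (hx : m ≤ x) (hy : m ≤ y) :
    |x ^ γ - y ^ γ| ≤ -γ * m ^ (γ - 1) * |x - y| := by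
  refine (convex_Ici m).norm_image_sub_le_of_norm_hasDerivWithin_le
    (f := fun z => z ^ γ) (f' := fun z => γ * z ^ (γ - 1)) (fun z hz => ?_) (fun z hz => ?_) hy hx
  · exact (hasDerivAt_rpow_const (Or.inl (hm.trans_le hz).ne')).hasDerivWithinAt
  · rw [norm_mul, norm_eq_abs, abs_of_nonpos hγ, norm_of_nonneg (rpow_nonneg (hm.le.trans hz) _)]
    exact mul_le_mul_of_nonneg_left (rpow_le_rpow_of_nonpos hm hz (by linarith)) (by linarith)

theorem abs_rpow_sub_rpow_sub_mul_le {q m x y : ℝ} (hq0 : 0 ≤ q) (hq1 : q ≤ 1) (hm : 0 < m)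
    (hx : m ≤ x) (hy : m ≤ y) :
    |x ^ q - y ^ q - q * y ^ (q - 1) * (x - y)| ≤ q * (1 - q) * m ^ (q - 2) * (x - y) ^ 2 := by
  have hseg : uIcc y x ⊆ Ici m := fun z hz => (le_inf hy hx).trans hz.1
  have hmvt := (convex_uIcc y x).norm_image_sub_le_of_norm_hasDerivWithin_le
    (f := fun z => z ^ q - q * y ^ (q - 1) * z) (f' := fun z => q * z ^ (q - 1) - q * y ^ (q - 1))
    (C := q * (1 - q) * m ^ (q - 2) * |x - y|) (fun z hz => ?_) (fun z hz => ?_)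
    left_mem_uIcc right_mem_uIcc
  · calc |x ^ q - y ^ q - q * y ^ (q - 1) * (x - y)|
        = ‖(x ^ q - q * y ^ (q - 1) * x) - (y ^ q - q * y ^ (q - 1) * y)‖ := by
          rw [norm_eq_abs]; ring_nf
      _ ≤ q * (1 - q) * m ^ (q - 2) * |x - y| * ‖x - y‖ := hmvt
      _ = q * (1 - q) * m ^ (q - 2) * (x - y) ^ 2 := by
          rw [norm_eq_abs, mul_assoc, abs_mul_abs_self, sq]
  · have := hasDerivAt_rpow_const (p := q) (Or.inl (hm.trans_le (hseg hz)).ne')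
    exact ((this.sub ((hasDerivAt_id z).const_mul (q * y ^ (q - 1)))).hasDerivWithinAt).congr_deriv
      (by ring)
  · have hlip := abs_rpow_sub_rpow_le_of_nonpos (γ := q - 1) (by linarith) hm (hseg hz) hy
    rw [show q - 1 - 1 = q - 2 by ring] at hlip
    rw [norm_eq_abs, ← mul_sub, abs_mul, abs_of_nonneg hq0, mul_assoc q, mul_assoc q]
    refine mul_le_mul_of_nonneg_left (hlip.trans ?_) hq0
    rw [neg_sub]
    exact mul_le_mul_of_nonneg_left (abs_sub_left_of_mem_uIcc hz)
      (mul_nonneg (by linarith) (by positivity))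

theorem sq_rpow_div_two {z : ℝ} (hz : 0 ≤ z) (e : ℝ) : (z ^ 2) ^ (e / 2) = z ^ e := by
  rw [← rpow_two, ← rpow_mul hz]
  ring_nf

theorem rpow_sub_two_mul_sq {x : ℝ} (hx : 0 < x) (e : ℝ) : x ^ (e - 2) * x ^ 2 = x ^ e := by
  rw [← rpow_two, ← rpow_add hx, sub_add_cancel]

end Real

open Real

theorem abs_norm_add_sq_sub_norm_sq_le {E : Type*} [SeminormedAddCommGroup E] (a b : E) :
    |‖a + b‖ ^ 2 - ‖a‖ ^ 2| ≤ (2 * ‖a‖ + ‖b‖) * ‖b‖ := by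
  have hdiff := abs_norm_sub_norm_le (a + b) a
  rw [add_sub_cancel_left] at hdiff
  rw [sq_sub_sq, abs_mul, abs_of_nonneg (by positivity)]
  exact mul_le_mul (by linarith [norm_add_le a b]) hdiff (abs_nonneg _) (by positivity)

section NormRpow

variable {F : Type*} [NormedAddCommGroup F] [InnerProductSpace ℝ F] {p : ℝ}

noncomputable def normRpowRemainder (p : ℝ) (a b : F) : ℝ :=
  ‖a + b‖ ^ p - p * ‖a‖ ^ (p - 2) * inner ℝ a b - ‖a‖ ^ p

theorem abs_normRpowRemainder_le_of_norm_le_two_mul (hp1 : 1 < p) (hp2 : p ≤ 2) {a b : F}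
    (hab : ‖a‖ ≤ 2 * ‖b‖) : |normRpowRemainder p a b| ≤ 36 * ‖b‖ ^ p := by
  set c := 3 * ‖b‖
  have hc : 0 ≤ c := by positivity
  have hsum : ‖a + b‖ ^ p ≤ c ^ p :=
    rpow_le_rpow (norm_nonneg _) ((norm_add_le a b).trans (by linarith)) (by linarith)
  have hfirst : ‖a‖ ^ p ≤ c ^ p := rpow_le_rpow (norm_nonneg a) (by linarith) (by linarith)
  have hcross : |p * ‖a‖ ^ (p - 2) * inner ℝ a b| ≤ 2 * c ^ p :=
    calc |p * ‖a‖ ^ (p - 2) * inner ℝ a b|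
        = p * ‖a‖ ^ (p - 2) * |inner ℝ a b| := by
          rw [abs_mul, abs_mul, abs_of_pos (by linarith), abs_of_nonneg (by positivity)]
      _ ≤ p * ‖a‖ ^ (p - 2) * (‖a‖ * ‖b‖) := by gcongr; exact abs_real_inner_le_norm a b
      _ = p * ‖a‖ ^ (p - 1) * ‖b‖ := by
          rw [show p - 1 = p - 2 + 1 by ring, rpow_add_one' (norm_nonneg a) (by norm_num; linarith)]
          ring
      _ ≤ 2 * c ^ (p - 1) * c := by
          gcongr <;> linarith [norm_nonneg b]
      _ = 2 * c ^ p := by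
          rw [mul_assoc, ← rpow_add_one' hc (by linarith), sub_add_cancel]
  have hc9 : c ^ p ≤ 9 * ‖b‖ ^ p := by
    rw [mul_rpow (by norm_num) (norm_nonneg b)]
    gcongr
    calc (3 : ℝ) ^ p ≤ 3 ^ (2 : ℝ) := rpow_le_rpow_of_exponent_le (by norm_num) hp2
      _ = 9 := by norm_num [rpow_two]
  rw [normRpowRemainder, abs_le]
  constructor <;> linarith [abs_le.mp hcross, rpow_nonneg (norm_nonneg (a + b)) p,
    rpow_nonneg (norm_nonneg a) p]

theorem abs_normRpowRemainder_le_of_two_mul_norm_le (hp0 : 0 ≤ p) (hp2 : p ≤ 2) {a b : F}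
    (hb : b ≠ 0) (hab : 2 * ‖b‖ ≤ ‖a‖) : |normRpowRemainder p a b| ≤ 26 * ‖b‖ ^ p := by
  have hb0 : 0 < ‖b‖ := norm_pos_iff.mpr hb
  set r := ‖a‖ / 2 with hr_def
  have hr : 0 < r := by linarith
  have hbr : ‖b‖ ≤ r := by linarith
  have hr_le : r ≤ ‖a + b‖ := by
    have := norm_sub_le (a + b) b
    rw [add_sub_cancel_right] at this
    linarith
  set s := ‖a + b‖ ^ 2 - ‖a‖ ^ 2 with hs_def
  have htaylor := abs_rpow_sub_rpow_sub_mul_le (q := p / 2) (x := ‖a + b‖ ^ 2) (y := ‖a‖ ^ 2)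
    (by linarith) (by linarith) (pow_pos hr 2) (pow_le_pow_left₀ hr.le hr_le 2)
    (pow_le_pow_left₀ hr.le (by linarith) 2)
  rw [show p / 2 - 1 = (p - 2) / 2 by ring, show p / 2 - 2 = (p - 2 - 2) / 2 by ring,
    sq_rpow_div_two (norm_nonneg _), sq_rpow_div_two (norm_nonneg _),
    sq_rpow_div_two (norm_nonneg _), sq_rpow_div_two hr.le] at htaylor
  have hs : s ^ 2 ≤ (5 * r * ‖b‖) ^ 2 := by
    have := abs_norm_add_sq_sub_norm_sq_le a b
    rw [← sq_abs]
    gcongr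
    nlinarith
  have hquad : r ^ (p - 2 - 2) * s ^ 2 ≤ 25 * ‖b‖ ^ p :=
    calc r ^ (p - 2 - 2) * s ^ 2 ≤ r ^ (p - 2 - 2) * (5 * r * ‖b‖) ^ 2 := by gcongr
      _ = 25 * (r ^ (p - 2 - 2) * r ^ 2) * ‖b‖ ^ 2 := by ring
      _ = 25 * r ^ (p - 2) * ‖b‖ ^ 2 := by rw [rpow_sub_two_mul_sq hr]
      _ ≤ 25 * ‖b‖ ^ (p - 2) * ‖b‖ ^ 2 := by
          have := rpow_le_rpow_of_nonpos hb0 hbr (by linarith : p - 2 ≤ 0)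
          gcongr
      _ = 25 * ‖b‖ ^ p := by rw [mul_assoc, rpow_sub_two_mul_sq hb0]
  have hremainder : |‖a + b‖ ^ p - ‖a‖ ^ p - p / 2 * ‖a‖ ^ (p - 2) * s| ≤ 25 * ‖b‖ ^ p :=
    calc _ ≤ p / 2 * (1 - p / 2) * r ^ (p - 2 - 2) * s ^ 2 := htaylor
      _ = p / 2 * (1 - p / 2) * (r ^ (p - 2 - 2) * s ^ 2) := by ring
      _ ≤ 1 * (25 * ‖b‖ ^ p) := mul_le_mul (by nlinarith) hquad (by positivity) zero_le_one
      _ = 25 * ‖b‖ ^ p := one_mul _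
  have hlin : p / 2 * (‖a‖ ^ (p - 2) * ‖b‖ ^ 2) ≤ ‖b‖ ^ p :=
    calc _ ≤ 1 * (‖b‖ ^ (p - 2) * ‖b‖ ^ 2) := by
          have := rpow_le_rpow_of_nonpos hb0 (by linarith : ‖b‖ ≤ ‖a‖) (by linarith : p - 2 ≤ 0)
          gcongr
          linarith
      _ = ‖b‖ ^ p := by rw [one_mul, rpow_sub_two_mul_sq hb0]
  have hsplit : normRpowRemainder p a b = (‖a + b‖ ^ p - ‖a‖ ^ p - p / 2 * ‖a‖ ^ (p - 2) * s)
      + p / 2 * (‖a‖ ^ (p - 2) * ‖b‖ ^ 2) := by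
    rw [normRpowRemainder, hs_def, norm_add_sq_real]; ring
  rw [hsplit]
  refine (abs_add_le _ _).trans ?_
  rw [abs_of_nonneg (by positivity : 0 ≤ p / 2 * (‖a‖ ^ (p - 2) * ‖b‖ ^ 2))]
  linarith

theorem abs_normRpowRemainder_le (hp1 : 1 < p) (hp2 : p ≤ 2) (a b : F) :
    |normRpowRemainder p a b| ≤ 36 * ‖b‖ ^ p := by
  rcases le_or_gt ‖a‖ (2 * ‖b‖) with hab | hab
  · exact abs_normRpowRemainder_le_of_norm_le_two_mul hp1 hp2 hab
  rcases eq_or_ne b 0 with rfl | hb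
  · simp only [normRpowRemainder, add_zero, inner_zero_right, mul_zero, sub_zero, sub_self,
      abs_zero, norm_zero]
    positivity
  calc _ ≤ 26 * ‖b‖ ^ p :=
        abs_normRpowRemainder_le_of_two_mul_norm_le (by linarith) hp2 hb hab.le
    _ ≤ 36 * ‖b‖ ^ p := by gcongr; norm_num

end NormRpow

theorem stmt_14_general (N : ℕ) (hN : 3 ≤ N) (p : ℝ)
    (hp1 : (N : ℝ) / ((N : ℝ) - 1) < p) (hp2 : p < 2)
    (σ : ℝ)
    (hσ : σ = (2 - p) / (p - 1))
    (u : ℝ → EuclideanSpace ℝ (Fin N) → ℝ) :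
    ∃ C > (0 : ℝ), ∀ R t : ℝ, 0 < R → R < 1 → 1 < t →
      ∀ φ : EuclideanSpace ℝ (Fin N) → ℝ,
        ContDiffOn ℝ 1 φ (ball (0 : EuclideanSpace ℝ (Fin N)) 1 \ {0}) →
        (∀ x ∈ ball (0 : EuclideanSpace ℝ (Fin N)) 1 \ {0},
          ‖x‖ ^ σ * |φ x| + ‖x‖ ^ (σ + 1) * ‖gradient φ x‖ ≤ R) →
        ∀ x ∈ ball (0 : EuclideanSpace ℝ (Fin N)) 1 \ {0},
          ‖x‖ ^ (σ + 2) *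
            |‖gradient (u t) x + gradient φ x‖ ^ p
              - p * ‖gradient (u t) x‖ ^ (p - 2) *
                  (inner ℝ (gradient (u t) x) (gradient φ x) : ℝ)
              - ‖gradient (u t) x‖ ^ p| ≤ C * R ^ p := by
  have hp1' : 1 < p := by
    have hN' : (3 : ℝ) ≤ N := by exact_mod_cast hN
    exact lt_of_le_of_lt ((one_le_div (by linarith)).mpr (by linarith)) hp1
  have hσp : (σ + 1) * p = σ + 2 := by
    have : p - 1 ≠ 0 := (sub_pos.mpr hp1').ne'
    rw [hσ]
    field_simp
    ring
  refine ⟨36, by norm_num, fun R t hR _ _ φ _ hφ x hx => ?_⟩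
  have hgrad : ‖x‖ ^ (σ + 1) * ‖gradient φ x‖ ≤ R := by
    have := hφ x hx
    have : 0 ≤ ‖x‖ ^ σ * |φ x| := by positivity
    linarith
  calc _ ≤ ‖x‖ ^ (σ + 2) * (36 * ‖gradient φ x‖ ^ p) := by
        gcongr
        exact abs_normRpowRemainder_le hp1' hp2.le _ _
    _ = 36 * (‖x‖ ^ (σ + 1) * ‖gradient φ x‖) ^ p := by
        rw [mul_rpow (by positivity) (norm_nonneg _), ← rpow_mul (norm_nonneg x), hσp]
        ring
    _ ≤ 36 * R ^ p := by gcongr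

/-- "Into", part 2: weighted bound on the quadratic remainder
`|∇u_t + ∇φ|^p - p|∇u_t|^{p-2}∇u_t·∇φ - |∇u_t|^p` for `φ` in the ball of radius `R` of the
weighted space `X`. -/
theorem stmt_14 (N : ℕ) (hN : 3 ≤ N) (p : ℝ)
    (hp1 : (N : ℝ) / ((N : ℝ) - 1) < p) (hp2 : p < 2)
    (α β σ : ℝ) (hα : α = (p - 1) * ((N : ℝ) - 1)) (hβ : β = (p - 1) / (α - 1))
    (hσ : σ = (2 - p) / (p - 1))
    (u : ℝ → EuclideanSpace ℝ (Fin N) → ℝ)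
    (hu : ∀ (t : ℝ) (x : EuclideanSpace ℝ (Fin N)),
      u t x = ∫ y in (‖x‖)..(1 : ℝ), (β * y + t * y ^ α) ^ (-(1 / (p - 1)))) :
    ∃ C > (0 : ℝ), ∀ R t : ℝ, 0 < R → R < 1 → 1 < t →
      ∀ φ : EuclideanSpace ℝ (Fin N) → ℝ,
        ContDiffOn ℝ 1 φ (ball (0 : EuclideanSpace ℝ (Fin N)) 1 \ {0}) →
        (∀ x ∈ ball (0 : EuclideanSpace ℝ (Fin N)) 1 \ {0},
          ‖x‖ ^ σ * |φ x| + ‖x‖ ^ (σ + 1) * ‖gradient φ x‖ ≤ R) →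
        ∀ x ∈ ball (0 : EuclideanSpace ℝ (Fin N)) 1 \ {0},
          ‖x‖ ^ (σ + 2) *
            |‖gradient (u t) x + gradient φ x‖ ^ p
              - p * ‖gradient (u t) x‖ ^ (p - 2) *
                  (inner ℝ (gradient (u t) x) (gradient φ x) : ℝ)
              - ‖gradient (u t) x‖ ^ p| ≤ C * R ^ p :=
  stmt_14_general N hN p hp1 hp2 σ hσ u
end
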